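/- Fix k ≥ 2, weights p₁, …, p_k > 0 with Σ_ℓ p_ℓ = 1, standard deviations σ₁, …, σ_k > 0, and μ ∈ ℝ^k. Then every diagonal entry of the mean Fisher matrix of the Gaussian mixture satisfies 0 ≤ I_{jj}(μ) = (p_j²/σ_j⁴) ∫_ℝ (x − μ_j)² φ_{σ_j}(x − μ_j)² / g(x;μ) dx ≤ p_j/σ_j², uniformly in μ. In particular, all entries of I(μ) are bounded by a constant independent of μ, hence so is √(det I(μ)). -/

import Mathlib

open MeasureTheory

noncomputable section

/-- Density of a centered Gaussian with standard deviation `σ`. -/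
def gaussPdf (σ x : ℝ) : ℝ :=
  (Real.sqrt (2 * Real.pi * σ ^ 2))⁻¹ * Real.exp (-(x ^ 2) / (2 * σ ^ 2))

/-- Gaussian mixture density `g(x; μ) = ∑ ℓ pℓ φ_{σℓ}(x - μℓ)`. -/
def gaussMix {k : ℕ} (p σ μ : Fin k → ℝ) (x : ℝ) : ℝ :=
  ∑ ℓ, p ℓ * gaussPdf (σ ℓ) (x - μ ℓ)

/-- Mean Fisher matrix of the Gaussian mixture with fixed weights `p` and scales `σ`. -/
def meanFisher {k : ℕ} (p σ μ : Fin k → ℝ) : Matrix (Fin k) (Fin k) ℝ := fun j h =>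
  p j * p h / (σ j ^ 2 * σ h ^ 2) *
    ∫ x : ℝ,
      (x - μ j) * (x - μ h) * gaussPdf (σ j) (x - μ j) * gaussPdf (σ h) (x - μ h) /
        gaussMix p σ μ x

/-! The mixture density dominates each of its components, `g ≥ p_j φ_j`, hence
`(x - μ_j)² φ_j² / g ≤ (x - μ_j)² φ_j / p_j`, whose integral is `σ_j² / p_j` by the second moment of
a Gaussian; this bound does not depend on `μ`. By AM-GM the same domination gives
`|I_{jh}| ≤ (p_j/σ_j² + p_h/σ_h²) / 2` off the diagonal, and a matrix with bounded entries has a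
bounded determinant. -/

open ProbabilityTheory Finset
open scoped NNReal

lemma gaussPdf_nonneg (s x : ℝ) : 0 ≤ gaussPdf s x := by
  unfold gaussPdf
  positivity

lemma gaussPdf_eq_gaussianPDFReal (s x : ℝ) :
    gaussPdf s x = gaussianPDFReal 0 ⟨s ^ 2, sq_nonneg s⟩ x := by
  simp only [gaussPdf, gaussianPDFReal, sub_zero]
  rfl

lemma integral_sq_mul_gaussPdf {s : ℝ} (hs : s ≠ 0) (c : ℝ) :
    ∫ x, (x - c) ^ 2 * gaussPdf s (x - c) = s ^ 2 := by
  set v : ℝ≥0 := ⟨s ^ 2, sq_nonneg s⟩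
  have hv : v ≠ 0 := by
    rw [← NNReal.coe_ne_zero]
    exact pow_ne_zero 2 hs
  rw [integral_sub_right_eq_self (fun x => x ^ 2 * gaussPdf s x)]
  calc ∫ x, x ^ 2 * gaussPdf s x
      = ∫ x, x ^ 2 ∂gaussianReal 0 v := by
        simp only [integral_gaussianReal_eq_integral_smul hv, gaussPdf_eq_gaussianPDFReal,
          smul_eq_mul, mul_comm, v]
    _ = Var[id; gaussianReal 0 v] := by
        simp [variance_eq_integral measurable_id.aemeasurable, integral_id_gaussianReal]
    _ = s ^ 2 := variance_id_gaussianReal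

lemma integrable_sq_mul_gaussPdf {s : ℝ} (hs : s ≠ 0) (c : ℝ) :
    Integrable (fun x => (x - c) ^ 2 * gaussPdf s (x - c)) :=
  .of_integral_ne_zero (by rw [integral_sq_mul_gaussPdf hs]; positivity)

lemma sq_mul_div_le_of_mul_le {c A G q : ℝ} (hq : 0 < q) (hA : 0 ≤ A) (hG : q * A ≤ G) :
    (c * A) ^ 2 / G ≤ c ^ 2 * A / q := by
  rcases (hG.trans' (by positivity) : (0 : ℝ) ≤ G).eq_or_lt with rfl | hG0
  · rw [div_zero]
    positivity
  rw [div_le_div_iff₀ hG0 hq]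
  calc (c * A) ^ 2 * q = c ^ 2 * A * (q * A) := by ring
    _ ≤ c ^ 2 * A * G := by gcongr

lemma abs_mul_div_le_add_sq_div {u v G : ℝ} (hG : 0 ≤ G) :
    |u * v / G| ≤ (u ^ 2 / G + v ^ 2 / G) / 2 := by
  rw [abs_div, abs_of_nonneg hG, abs_mul, ← add_div, div_right_comm _ G]
  gcongr
  have := two_mul_le_add_sq |u| |v|
  rw [sq_abs, sq_abs] at this
  linarith

section Mixture

variable {k : ℕ} {p σ : Fin k → ℝ}

lemma gaussMix_nonneg (hp : ∀ ℓ, 0 ≤ p ℓ) (μ : Fin k → ℝ) (x : ℝ) : 0 ≤ gaussMix p σ μ x :=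
  sum_nonneg fun ℓ _ => mul_nonneg (hp ℓ) (gaussPdf_nonneg _ _)

lemma mul_gaussPdf_le_gaussMix (hp : ∀ ℓ, 0 ≤ p ℓ) (μ : Fin k → ℝ) (j : Fin k) (x : ℝ) :
    p j * gaussPdf (σ j) (x - μ j) ≤ gaussMix p σ μ x :=
  single_le_sum (f := fun ℓ => p ℓ * gaussPdf (σ ℓ) (x - μ ℓ))
    (fun ℓ _ => mul_nonneg (hp ℓ) (gaussPdf_nonneg _ _)) (mem_univ j)

lemma abs_fisherIntegrand_le (hp : ∀ ℓ, 0 < p ℓ) (μ : Fin k → ℝ) (j h : Fin k) (x : ℝ) :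
    |(x - μ j) * (x - μ h) * gaussPdf (σ j) (x - μ j) * gaussPdf (σ h) (x - μ h) /
        gaussMix p σ μ x| ≤
      ((x - μ j) ^ 2 * gaussPdf (σ j) (x - μ j) / p j +
        (x - μ h) ^ 2 * gaussPdf (σ h) (x - μ h) / p h) / 2 := by
  have hp' : ∀ ℓ, 0 ≤ p ℓ := fun ℓ => (hp ℓ).le
  calc _ = |((x - μ j) * gaussPdf (σ j) (x - μ j)) * ((x - μ h) * gaussPdf (σ h) (x - μ h)) /
          gaussMix p σ μ x| := by ring_nf
    _ ≤ _ := abs_mul_div_le_add_sq_div (gaussMix_nonneg hp' μ x)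
    _ ≤ _ := by
      gcongr (?_ + ?_) / 2 <;> exact sq_mul_div_le_of_mul_le (hp _) (gaussPdf_nonneg _ _)
        (mul_gaussPdf_le_gaussMix hp' μ _ x)

lemma abs_meanFisher_le (hp : ∀ ℓ, 0 < p ℓ) (hσ : ∀ ℓ, σ ℓ ≠ 0) (μ : Fin k → ℝ) (j h : Fin k) :
    |meanFisher p σ μ j h| ≤ (p j / σ j ^ 2 + p h / σ h ^ 2) / 2 := by
  have hint : ∀ ℓ, Integrable (fun x => (x - μ ℓ) ^ 2 * gaussPdf (σ ℓ) (x - μ ℓ) / p ℓ) :=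
    fun ℓ => (integrable_sq_mul_gaussPdf (hσ ℓ) (μ ℓ)).div_const _
  have hbound : |∫ x, (x - μ j) * (x - μ h) * gaussPdf (σ j) (x - μ j) *
      gaussPdf (σ h) (x - μ h) / gaussMix p σ μ x| ≤ (σ j ^ 2 / p j + σ h ^ 2 / p h) / 2 :=
    calc _ ≤ ∫ x, |(x - μ j) * (x - μ h) * gaussPdf (σ j) (x - μ j) *
          gaussPdf (σ h) (x - μ h) / gaussMix p σ μ x| := abs_integral_le_integral_abs
      _ ≤ ∫ x, ((x - μ j) ^ 2 * gaussPdf (σ j) (x - μ j) / p j +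
          (x - μ h) ^ 2 * gaussPdf (σ h) (x - μ h) / p h) / 2 :=
        integral_mono_of_nonneg (.of_forall fun _ => abs_nonneg _)
          (((hint j).add (hint h)).div_const 2)
          (.of_forall fun x => abs_fisherIntegrand_le hp μ j h x)
      _ = _ := by
        rw [integral_div, integral_add (hint j) (hint h), integral_div, integral_div,
          integral_sq_mul_gaussPdf (hσ j), integral_sq_mul_gaussPdf (hσ h)]
  have hpj := hp j
  have hph := hp h
  have hσj := hσ j
  have hσh := hσ h
  have hc : 0 ≤ p j * p h / (σ j ^ 2 * σ h ^ 2) := by positivity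
  unfold meanFisher
  rw [abs_mul, abs_of_nonneg hc]
  calc _ ≤ p j * p h / (σ j ^ 2 * σ h ^ 2) * ((σ j ^ 2 / p j + σ h ^ 2 / p h) / 2) := by
        gcongr
    _ = _ := by
        field_simp
        ring

lemma meanFisher_self_nonneg (hp : ∀ ℓ, 0 ≤ p ℓ) (μ : Fin k → ℝ) (j : Fin k) :
    0 ≤ meanFisher p σ μ j j := by
  unfold meanFisher
  refine mul_nonneg (div_nonneg (mul_self_nonneg _) (by positivity)) (integral_nonneg fun x => ?_)
  exact div_nonneg ((mul_self_nonneg ((x - μ j) * gaussPdf (σ j) (x - μ j))).trans_eq (by ring))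
    (gaussMix_nonneg hp μ x)

end Mixture

theorem meanFisher_diag_bounded_general (m : ℕ) (p σ : Fin (m + 2) → ℝ)
    (hp : ∀ ℓ, 0 < p ℓ) (hσ : ∀ ℓ, 0 < σ ℓ) :
    (∀ (μ : Fin (m + 2) → ℝ) (j : Fin (m + 2)),
      0 ≤ meanFisher p σ μ j j ∧ meanFisher p σ μ j j ≤ p j / σ j ^ 2) ∧
    (∃ C : ℝ, ∀ (μ : Fin (m + 2) → ℝ) (j h : Fin (m + 2)),
      |meanFisher p σ μ j h| ≤ C) ∧
    (∃ C : ℝ, ∀ μ : Fin (m + 2) → ℝ, Real.sqrt (meanFisher p σ μ).det ≤ C) := by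
  have hentry := abs_meanFisher_le hp fun ℓ => (hσ ℓ).ne'
  set C := ∑ ℓ, p ℓ / σ ℓ ^ 2
  have hC : ∀ μ j h, |meanFisher p σ μ j h| ≤ C := fun μ j h => by
    have hle : ∀ i, p i / σ i ^ 2 ≤ C := fun i =>
      single_le_sum (f := fun ℓ => p ℓ / σ ℓ ^ 2) (fun ℓ _ => div_nonneg (hp ℓ).le (sq_nonneg _))
        (mem_univ i)
    linarith [hentry μ j h, hle j, hle h]
  refine ⟨fun μ j => ⟨meanFisher_self_nonneg (fun ℓ => (hp ℓ).le) μ j, ?_⟩, ⟨C, hC⟩,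
    ⟨Real.sqrt ((m + 2).factorial * C ^ (m + 2)), fun μ => Real.sqrt_le_sqrt ?_⟩⟩
  · linarith [le_abs_self (meanFisher p σ μ j j), hentry μ j j]
  · have hdet := Matrix.det_le (abv := AbsoluteValue.abs) (hC μ)
    rw [Fintype.card_fin, nsmul_eq_mul] at hdet
    exact (le_abs_self _).trans hdet

/-- for a Gaussian mixture with `k = m + 2 ≥ 2` components, fixed
positive weights summing to one and fixed positive scales, every diagonal entry of
the mean Fisher matrix satisfies `0 ≤ I_{jj}(μ) ≤ p_j/σ_j²` uniformly in `μ`; in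
particular all entries of `I(μ)`, and `√(det I(μ))`, are bounded by constants
independent of `μ`. -/
theorem meanFisher_diag_bounded (m : ℕ) (p σ : Fin (m + 2) → ℝ)
    (hp : ∀ ℓ, 0 < p ℓ) (hsum : ∑ ℓ, p ℓ = 1) (hσ : ∀ ℓ, 0 < σ ℓ) :
    (∀ (μ : Fin (m + 2) → ℝ) (j : Fin (m + 2)),
      0 ≤ meanFisher p σ μ j j ∧ meanFisher p σ μ j j ≤ p j / σ j ^ 2) ∧
    (∃ C : ℝ, ∀ (μ : Fin (m + 2) → ℝ) (j h : Fin (m + 2)),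
      |meanFisher p σ μ j h| ≤ C) ∧
    (∃ C : ℝ, ∀ μ : Fin (m + 2) → ℝ, Real.sqrt (meanFisher p σ μ).det ≤ C) :=
  meanFisher_diag_bounded_general m p σ hp hσ
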